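/- arXiv:2312.10757 — 4 statements merged into one kernel-verified Lean document; each statement's English description precedes it below -/
import Mathlib

section
/- Let b3 be the fixed point of the morphism 0→012, 1→02, 2→1 over the alphabet {0,1,2}. Then b3 is square-free, i.e., it contains no nonempty factor of the form uu. -/
/-- `u` is a factor of the infinite word `w : ℕ → α`. -/
def FactorN {α : Type*} (w : ℕ → α) (u : List α) : Prop :=
  ∃ i : ℕ, ∀ k : ℕ, (h : k < u.length) → u[k]'h = w (i + k)

/-- The Hall–Thue morphism 0→012, 1→02, 2→1. -/
def htMorph : Fin 3 → List (Fin 3) := ![[0,1,2], [0,2], [1]]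

/-- `w` is the fixed point of `f` starting with 0: its first letter is 0 and
applying `f` to any prefix of `w` yields a prefix of `w`. -/
def IsFixedPointN (f : Fin 3 → List (Fin 3)) (w : ℕ → Fin 3) : Prop :=
  w 0 = 0 ∧ ∀ n : ℕ, ∀ k : ℕ, (h : k < (((List.range n).map w).flatMap f).length) →
    (((List.range n).map w).flatMap f)[k]'h = w k

namespace B3SF

/-- Flattened image of the length-`n` prefix of `w` under substitution `g`. -/
def P {α β : Type*} (g : α → List β) (w : ℕ → α) (n : ℕ) : List β :=
  ((List.range n).map w).flatMap g

theorem getElem_congr_idx {α : Type*} (l : List α) {i j : ℕ} (h : i = j) (hi : i < l.length) :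
    l[i] = l[j]'(h ▸ hi) := by subst h; rfl

theorem P_succ {α β : Type*} (g : α → List β) (w : ℕ → α) (n : ℕ) :
    P g w (n+1) = P g w n ++ g (w n) := by
  simp [P, List.range_succ]

theorem P_prefix {α β : Type*} (g : α → List β) (w : ℕ → α) {n m : ℕ} (h : n ≤ m) :
    P g w n <+: P g w m := by
  induction m with
  | zero => simp [Nat.le_zero.mp h]
  | succ m ih =>
    rcases Nat.eq_or_lt_of_le h with h' | h'
    · rw [h']
    · exact (ih (Nat.lt_succ_iff.mp h')).trans
        (by rw [P_succ]; exact List.prefix_append _ _)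

theorem P_agree {α β : Type*} (g : α → List β) (w : ℕ → α) {n₁ n₂ k : ℕ}
    (h₁ : k < (P g w n₁).length) (h₂ : k < (P g w n₂).length) :
    (P g w n₁)[k] = (P g w n₂)[k] := by
  rcases le_total n₁ n₂ with h | h
  · exact (P_prefix g w h).getElem h₁
  · exact ((P_prefix g w h).getElem h₂).symm

theorem P_length_ge {α β : Type*} (g : α → List β) (w : ℕ → α)
    (hg : ∀ a, 1 ≤ (g a).length) (n : ℕ) : n ≤ (P g w n).length := by
  induction n with
  | zero => simp
  | succ n ih =>
    rw [P_succ, List.length_append]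
    have := hg (w n); omega

/-- The infinite word obtained by applying substitution `g` to `w`. -/
def seqD {α β : Type*} [Inhabited β] (g : α → List β) (w : ℕ → α) (p : ℕ) : β :=
  (P g w (p+1)).getD p default

theorem seqD_eq {α β : Type*} [Inhabited β] (g : α → List β) (w : ℕ → α)
    (hg : ∀ a, 1 ≤ (g a).length) (n k : ℕ) (h : k < (P g w n).length) :
    (P g w n)[k] = seqD g w k := by
  have hk : k < (P g w (k+1)).length := lt_of_lt_of_le (Nat.lt_succ_self k) (P_length_ge g w hg (k+1))
  rw [seqD, List.getD_eq_getElem _ _ hk]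
  exact P_agree g w h hk

/-- The Thue–Morse morphism. -/
def tmMorph : Fin 2 → List (Fin 2) := ![[0,1],[1,0]]

/-- Coding morphism: a ternary letter `c` codes the block `0 1^(2-c)` of Thue–Morse. -/
def tau : Fin 3 → List (Fin 2) := ![[0,1,1],[0,1],[0]]

theorem tau_len : ∀ a : Fin 3, 1 ≤ (tau a).length := by decide

theorem ht_len : ∀ a : Fin 3, 1 ≤ (htMorph a).length := by decide

theorem letter_comp : ∀ c : Fin 3, (htMorph c).flatMap tau = (tau c).flatMap tmMorph := by
  decide

theorem list_comp (x : List (Fin 3)) :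
    (x.flatMap htMorph).flatMap tau = (x.flatMap tau).flatMap tmMorph := by
  induction x with
  | nil => rfl
  | cons a x ih =>
    simp only [List.flatMap_cons, List.flatMap_append, ih, letter_comp]

section FixedPoint

variable (w : ℕ → Fin 3)

/-- The binary coding of `w`: the candidate Thue–Morse word. -/
def t (p : ℕ) : Fin 2 := seqD tau w p

/-- Cumulative lengths of the `tau`-blocks. -/
def Cτ (n : ℕ) : ℕ := (P tau w n).length

theorem Cτ_succ (n : ℕ) : Cτ w (n+1) = Cτ w n + (tau (w n)).length := by
  rw [Cτ, Cτ, P_succ, List.length_append]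

theorem Cτ_lt {n m : ℕ} (h : n < m) : Cτ w n < Cτ w m := by
  induction m with
  | zero => omega
  | succ m ih =>
    have h2 := Cτ_succ w m
    have h3 := tau_len (w m)
    rcases Nat.lt_or_ge n m with h' | h'
    · have := ih h'; omega
    · have : n = m := by omega
      subst this; omega

theorem Cτ_le {n m : ℕ} (h : n ≤ m) : Cτ w n ≤ Cτ w m := by
  rcases Nat.eq_or_lt_of_le h with h' | h'
  · rw [h']
  · exact le_of_lt (Cτ_lt w h')

theorem t_eq (n k : ℕ) (h : k < (P tau w n).length) : (P tau w n)[k] = t w k :=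
  seqD_eq tau w tau_len n k h

theorem t_block (n j : ℕ) (h : j < (tau (w n)).length) :
    t w (Cτ w n + j) = (tau (w n))[j] := by
  have h2 : Cτ w n + j < (P tau w (n+1)).length := by
    rw [P_succ, List.length_append]; exact Nat.add_lt_add_left h _
  rw [← t_eq w (n+1) _ h2]
  rw [List.getElem_of_eq (P_succ tau w n) h2]
  have e : Cτ w n + j = j + (P tau w n).length := Nat.add_comm _ _
  exact (getElem_congr_idx _ e _).trans (List.getElem_append_right' (P tau w n) h).symm

theorem map_range_t (n : ℕ) : (List.range (Cτ w n)).map (t w) = P tau w n := by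
  apply List.ext_getElem (by simp [Cτ])
  intro i h1 h2
  simp only [List.getElem_map, List.getElem_range]
  exact (t_eq w n i h2).symm

variable (hw : IsFixedPointN htMorph w)

include hw

theorem w_pref (n k : ℕ) (h : k < (P htMorph w n).length) : (P htMorph w n)[k] = w k :=
  hw.2 n k h

theorem map_range_B (n : ℕ) :
    (List.range ((P htMorph w n).length)).map w = P htMorph w n := by
  apply List.ext_getElem (by simp)
  intro i h1 h2
  simp only [List.getElem_map, List.getElem_range]
  exact (w_pref w hw n i h2).symm

theorem P_tm_t (n : ℕ) :
    P tmMorph (t w) (Cτ w n) = P tau w ((P htMorph w n).length) := by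
  show ((List.range (Cτ w n)).map (t w)).flatMap tmMorph = _
  rw [map_range_t w n]
  show (((List.range n).map w).flatMap tau).flatMap tmMorph = _
  rw [← list_comp]
  show (P htMorph w n).flatMap tau = _
  conv_lhs => rw [← map_range_B w hw n]
  rfl

theorem tm_agree (m k : ℕ) (h : k < (P tmMorph (t w) m).length) :
    (P tmMorph (t w) m)[k] = t w k := by
  have hm : m ≤ Cτ w m := P_length_ge tau w tau_len m
  have hpre := P_prefix tmMorph (t w) hm
  have hk : k < (P tmMorph (t w) (Cτ w m)).length := lt_of_lt_of_le h hpre.length_le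
  rw [hpre.getElem h]
  have h2 : k < (P tau w ((P htMorph w m).length)).length := by
    rw [← P_tm_t w hw m]; exact hk
  rw [List.getElem_of_eq (P_tm_t w hw m) hk]
  exact t_eq w _ k h2

omit hw in
theorem len_P_tm (s : ℕ → Fin 2) (n : ℕ) : (P tmMorph s n).length = 2 * n := by
  induction n with
  | zero => simp [P]
  | succ n ih =>
    rw [P_succ, List.length_append, ih]
    have : ∀ a : Fin 2, (tmMorph a).length = 2 := by decide
    rw [this]; omega

theorem t_rec (n j : ℕ) (hj : j < 2) : t w (2 * n + j) = (tmMorph (t w n)).getD j 0 := by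
  have hlen : ∀ a : Fin 2, (tmMorph a).length = 2 := by decide
  have h : 2 * n + j < (P tmMorph (t w) (n+1)).length := by rw [len_P_tm]; omega
  rw [← tm_agree w hw (n+1) _ h]
  rw [List.getElem_of_eq (P_succ tmMorph (t w) n) h]
  rw [List.getElem_append_right (by rw [len_P_tm]; omega)]
  rw [List.getD_eq_getElem _ _ (by rw [hlen]; omega)]
  congr 1
  rw [len_P_tm]; omega

theorem t_even (n : ℕ) : t w (2 * n) = t w n := by
  have := t_rec w hw n 0 (by omega)
  rw [Nat.add_zero] at this
  rw [this]
  have h : ∀ a : Fin 2, (tmMorph a).getD 0 0 = a := by decide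
  exact h _

theorem t_odd (n : ℕ) : t w (2 * n + 1) = t w n + 1 := by
  rw [t_rec w hw n 1 (by omega)]
  have h : ∀ a : Fin 2, (tmMorph a).getD 1 0 = a + 1 := by decide
  exact h _

end FixedPoint

section Overlap

variable (s : ℕ → Fin 2) (h0 : ∀ n, s (2 * n) = s n) (h1 : ∀ n, s (2 * n + 1) = s n + 1)

include h0 h1 in
theorem no3 (n : ℕ) : ¬ (s n = s (n+1) ∧ s (n+1) = s (n+2)) := by
  rintro ⟨e1, e2⟩
  have key : ∀ x : Fin 2, x ≠ x + 1 := by decide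
  rcases Nat.even_or_odd n with ⟨a, ha⟩ | ⟨a, ha⟩
  · have hA := h0 a
    have hB := h1 a
    have eA : 2 * a = n := by omega
    have eB : 2 * a + 1 = n + 1 := by omega
    rw [eA] at hA; rw [eB] at hB
    rw [hA, hB] at e1
    exact key _ e1
  · have hA := h0 (a+1)
    have hB := h1 (a+1)
    have eA : 2 * (a+1) = n + 1 := by omega
    have eB : 2 * (a+1) + 1 = n + 2 := by omega
    rw [eA] at hA; rw [eB] at hB
    rw [hA, hB] at e2
    exact key _ e2

include h0 h1 in
theorem tm_no_overlap : ∀ m, 1 ≤ m → ∀ i, ¬ (∀ j, j ≤ m → s (i + j + m) = s (i + j)) := by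
  intro m
  induction m using Nat.strong_induction_on with
  | _ m IH =>
  intro hm i H
  rcases Nat.even_or_odd m with ⟨k, hk⟩ | ⟨k, hk⟩
  · -- m = 2k even : descend
    have hk1 : 1 ≤ k := by omega
    rcases Nat.even_or_odd i with ⟨a, ha⟩ | ⟨a, ha⟩
    · apply IH k (by omega) hk1 a
      intro j' hj'
      have hH := H (2 * j') (by omega)
      have e1 : i + 2 * j' + m = 2 * (a + j' + k) := by omega
      have e2 : i + 2 * j' = 2 * (a + j') := by omega
      rw [e1, e2, h0, h0] at hH
      exact hH
    · apply IH k (by omega) hk1 a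
      intro j' hj'
      have hH := H (2 * j') (by omega)
      have e1 : i + 2 * j' + m = 2 * (a + j' + k) + 1 := by omega
      have e2 : i + 2 * j' = 2 * (a + j') + 1 := by omega
      rw [e1, e2, h1, h1] at hH
      have cancel : ∀ x y : Fin 2, x + 1 = y + 1 → x = y := by decide
      exact cancel _ _ hH
  · -- m = 2k+1 odd
    rcases Nat.eq_or_lt_of_le hm with h' | h'
    · -- m = 1
      have hA := H 0 (by omega)
      have hB := H 1 (by omega)
      rw [← h'] at hA hB
      apply no3 s h0 h1 i
      constructor
      · rw [(by omega : i + 1 = i + 0 + 1)] at hA ⊢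
        rw [(by omega : i + 0 + 1 = i + 0 + 1)] at hA
        exact hA.symm
      · have : s (i + 1 + 1) = s (i + 1) := hB
        rw [(by omega : i + 2 = i + 1 + 1)]
        exact this.symm
    · -- m = 2k+1 ≥ 3, so k ≥ 1
      have hk1 : 1 ≤ k := by omega
      have H0 := H 0 (by omega)
      have H1 := H 1 (by omega)
      have H2 := H 2 (by omega)
      have H3 := H 3 (by omega)
      rcases Nat.even_or_odd i with ⟨a, ha⟩ | ⟨a, ha⟩
      · -- i = 2a even
        have e0l : i + 0 + m = 2 * (a+k) + 1 := by omega
        have e0r : i + 0 = 2 * a := by omega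
        have e1l : i + 1 + m = 2 * (a+k+1) := by omega
        have e1r : i + 1 = 2 * a + 1 := by omega
        have e2l : i + 2 + m = 2 * (a+k+1) + 1 := by omega
        have e2r : i + 2 = 2 * (a+1) := by omega
        have e3l : i + 3 + m = 2 * (a+k+2) := by omega
        have e3r : i + 3 = 2 * (a+1) + 1 := by omega
        rw [e0l, e0r, h1, h0] at H0
        rw [e1l, e1r, h0, h1] at H1
        rw [e2l, e2r, h1, h0] at H2
        rw [e3l, e3r, h0, h1] at H3
        apply no3 s h0 h1 (a+k)
        have key : ∀ x y p q r : Fin 2,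
            p + 1 = x → q = x + 1 → q + 1 = y → r = y + 1 → (p = q ∧ q = r) := by decide
        have := key (s a) (s (a+1)) (s (a+k)) (s (a+k+1)) (s (a+k+2)) H0 H1 H2 H3
        exact ⟨by rw [(by omega : a+k+1 = a+k+1)]; exact this.1,
               by rw [(by omega : a+k+2 = a+k+1+1)] at this ⊢; exact this.2⟩
      · -- i = 2a+1 odd
        have e0l : i + 0 + m = 2 * (a+k+1) := by omega
        have e0r : i + 0 = 2 * a + 1 := by omega
        have e1l : i + 1 + m = 2 * (a+k+1) + 1 := by omega
        have e1r : i + 1 = 2 * (a+1) := by omega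
        have e2l : i + 2 + m = 2 * (a+k+2) := by omega
        have e2r : i + 2 = 2 * (a+1) + 1 := by omega
        have e3l : i + 3 + m = 2 * (a+k+2) + 1 := by omega
        have e3r : i + 3 = 2 * (a+2) := by omega
        rw [e0l, e0r, h0, h1] at H0
        rw [e1l, e1r, h1, h0] at H1
        rw [e2l, e2r, h0, h1] at H2
        rw [e3l, e3r, h1, h0] at H3
        apply no3 s h0 h1 a
        have key : ∀ x y z p q : Fin 2,
            p = x + 1 → p + 1 = y → q = y + 1 → q + 1 = z → (x = y ∧ y = z) := by decide
        have := key (s a) (s (a+1)) (s (a+2)) (s (a+k+1)) (s (a+k+2)) H0 H1 H2 H3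
        exact ⟨by rw [(by omega : a+1 = a+1)]; exact this.1,
               by rw [(by omega : a+2 = a+1+1)] at this ⊢; exact this.2⟩

end Overlap

theorem exists_block (w : ℕ → Fin 3) (x : ℕ) :
    ∀ n, x < Cτ w n → ∃ j, j < n ∧ Cτ w j ≤ x ∧ x < Cτ w (j+1) := by
  intro n
  induction n with
  | zero => intro h; simp [Cτ, P] at h
  | succ n ih =>
    intro h
    rcases Nat.lt_or_ge x (Cτ w n) with h' | h'
    · obtain ⟨j, hj⟩ := ih h'
      exact ⟨j, by omega, hj.2⟩
    · exact ⟨n, by omega, h', h⟩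

end B3SF

open B3SF in
theorem b3_squarefree (w : ℕ → Fin 3) (hw : IsFixedPointN htMorph w) :
    ∀ u : List (Fin 3), u ≠ [] → ¬ FactorN w (u ++ u) := by
  intro u hne hf
  obtain ⟨i, hocc⟩ := hf
  set m := u.length with hm
  have hm1 : 1 ≤ m := by
    rw [hm]; exact List.length_pos_iff.mpr hne
  -- square relation
  have R : ∀ j, j < m → w (i + j + m) = w (i + j) := by
    intro j hj
    have hlen : (u ++ u).length = 2 * m := by simp [hm]; omega
    have h1 : j < (u ++ u).length := by omega
    have h2 : m + j < (u ++ u).length := by omega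
    have e1 := hocc j h1
    have e2 := hocc (m + j) h2
    have g1 : (u ++ u)[j]'h1 = u[j]'hj := List.getElem_append_left hj
    have g2 : (u ++ u)[m + j]'h2 = u[j]'hj := by
      rw [List.getElem_append_right (by omega : u.length ≤ m + j)]
      congr 1; omega
    rw [g1] at e1
    rw [g2] at e2
    rw [(by omega : i + j + m = i + (m + j)), ← e2, ← e1]
  -- the coded word and overlap
  set s := t w with hs
  have hs0 := t_even w hw
  have hs1 := t_odd w hw
  set l := Cτ w (i + m) - Cτ w i with hl
  have hCl : Cτ w (i + m) = Cτ w i + l := by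
    have := Cτ_le w (by omega : i ≤ i + m); omega
  have hl1 : 1 ≤ l := by
    have := Cτ_lt w (by omega : i < i + m); omega
  have tele : ∀ j, j ≤ m → Cτ w (i + j + m) = Cτ w (i + j) + l := by
    intro j
    induction j with
    | zero =>
      intro _
      rw [(by omega : i + 0 + m = i + m), (by omega : i + 0 = i)]
      exact hCl
    | succ j ih =>
      intro hj
      have hj' : j ≤ m := by omega
      have hjm : j < m := by omega
      have e1 : i + (j+1) + m = (i + j + m) + 1 := by omega
      have e2 : i + (j+1) = (i + j) + 1 := by omega
      rw [e1, e2, Cτ_succ, Cτ_succ, ih hj', R j hjm]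
      omega
  -- overlap in s with period l at position Cτ w i
  have tau0 : ∀ a : Fin 3, (tau a).getD 0 0 = 0 := by decide
  have Olap : ∀ q, q ≤ l → s (Cτ w i + q + l) = s (Cτ w i + q) := by
    intro q hq
    rcases Nat.eq_or_lt_of_le hq with hq' | hq'
    · -- q = l : both positions are starts of tau-blocks, whose first letter is 0
      have b1 : s (Cτ w (i + m)) = 0 := by
        have h := t_block w (i + m) 0 (tau_len _)
        rw [Nat.add_zero] at h
        rw [hs, h, ← List.getD_eq_getElem _ 0 (tau_len _)]
        exact tau0 _
      have b2 : s (Cτ w (i + m + m)) = 0 := by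
        have h := t_block w (i + m + m) 0 (tau_len _)
        rw [Nat.add_zero] at h
        rw [hs, h, ← List.getD_eq_getElem _ 0 (tau_len _)]
        exact tau0 _
      have e1 : Cτ w i + q + l = Cτ w (i + m + m) := by
        have := tele m (le_refl m)
        omega
      have e2 : Cτ w i + q = Cτ w (i + m) := by omega
      rw [e1, e2, b1, b2]
    · -- q < l : inside a block
      have hx : Cτ w i + q < Cτ w (i + m) := by omega
      obtain ⟨j, hjlt, hj1, hj2⟩ := exists_block w (Cτ w i + q) (i + m) hx
      have hij : i ≤ j := by
        by_contra hc
        push_neg at hc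
        have : Cτ w (j+1) ≤ Cτ w i := Cτ_le w (by omega)
        omega
      obtain ⟨j₀, rfl⟩ : ∃ j₀, j = i + j₀ := ⟨j - i, by omega⟩
      have hj₀ : j₀ < m := by omega
      set d := Cτ w i + q - Cτ w (i + j₀) with hd
      have hdlt : d < (tau (w (i + j₀))).length := by
        have := Cτ_succ w (i + j₀); omega
      have hx1 : Cτ w i + q = Cτ w (i + j₀) + d := by omega
      have hRj := R j₀ hj₀
      have hx2 : Cτ w i + q + l = Cτ w (i + j₀ + m) + d := by
        have := tele j₀ (le_of_lt hj₀); omega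
      have v1 : s (Cτ w i + q) = (tau (w (i + j₀)))[d]'hdlt := by
        rw [hx1, hs]; exact t_block w (i + j₀) d hdlt
      have hdlt2 : d < (tau (w (i + j₀ + m))).length := by rw [hRj]; exact hdlt
      have v2 : s (Cτ w i + q + l) = (tau (w (i + j₀ + m)))[d]'hdlt2 := by
        rw [hx2, hs]; exact t_block w (i + j₀ + m) d hdlt2
      rw [v1, v2]
      congr 1
      rw [hRj]
  exact tm_no_overlap s hs0 hs1 l hl1 (Cτ w i) Olap
end

section
/- Let b3 be the fixed point of the morphism 0→012, 1→02, 2→1. Then b3 contains neither 010 nor 212 as a factor. -/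
/-- Decomposition of an infix of an append. -/
lemma infix_append_split {α : Type*} {t l₁ l₂ : List α} (h : t <:+: l₁ ++ l₂) :
    t <:+: l₁ ∨ t <:+: l₂ ∨
      ∃ s₁ s₂, t = s₁ ++ s₂ ∧ s₁ ≠ [] ∧ s₁ <:+ l₁ ∧ s₂ <+: l₂ := by
  obtain ⟨s, e, hse⟩ := h
  rcases le_or_gt l₁.length s.length with hls | hls
  · -- t is inside l₂
    right; left
    refine ⟨s.drop l₁.length, e, ?_⟩
    have hd : List.drop l₁.length (s ++ t ++ e) = List.drop l₁.length (l₁ ++ l₂) := by rw [hse]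
    rw [List.drop_left] at hd
    rw [← hd, List.append_assoc s t e, List.drop_append_of_le_length hls]
    exact (List.append_assoc _ _ _)
  · rcases le_or_gt t.length (l₁.length - s.length) with hts | hts
    · -- t is inside l₁
      left
      have hpre : s ++ t <+: l₁ ++ l₂ := ⟨e, hse⟩
      have hlen : (s ++ t).length ≤ l₁.length := by
        rw [List.length_append]; omega
      have hpre' : s ++ t <+: l₁ := by
        rw [List.prefix_iff_eq_take] at hpre ⊢
        rwa [List.take_append_of_le_length hlen] at hpre
      have hmid : t <:+: s ++ t := ⟨s, [], by simp⟩
      exact hmid.trans hpre'.isInfix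
    · -- t spans the boundary
      right; right
      set j := l₁.length - s.length with hj
      have hjt : j ≤ t.length := le_of_lt hts
      have h1 : (s ++ t.take j) ++ (t.drop j ++ e) = l₁ ++ l₂ := by
        rw [List.append_assoc s (t.take j), ← List.append_assoc (t.take j),
          List.take_append_drop, ← List.append_assoc, hse]
      have hpre : s ++ t.take j <+: l₁ ++ l₂ := ⟨_, h1⟩
      have hlen : (s ++ t.take j).length = l₁.length := by
        rw [List.length_append, List.length_take]; omega
      have key : s ++ t.take j = l₁ := by
        have h2 := List.prefix_iff_eq_take.mp hpre
        rwa [hlen, List.take_left] at h2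
      have hl2 : t.drop j ++ e = l₂ := by
        rw [key] at h1
        exact List.append_cancel_left h1
      refine ⟨t.take j, t.drop j, (List.take_append_drop j t).symm, ?_, ⟨s, key⟩, ⟨e, hl2⟩⟩
      intro hnil
      have hlt : (List.take j t).length = j := by rw [List.length_take]; omega
      rw [hnil] at hlt
      simp at hlt
      omega

/-- The first two letters of `flatMap htMorph u` are a prefix of the image of two letters. -/
lemma take2_flatMap : ∀ u : List (Fin 3),
    ∃ b c : Fin 3, (u.flatMap htMorph).take 2 <+: htMorph b ++ htMorph c := by
  intro u
  match u with
  | [] => exact ⟨0, 0, by simp⟩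
  | [b] =>
      refine ⟨b, 0, ?_⟩
      simp only [List.flatMap_cons, List.flatMap_nil, List.append_nil]
      exact (List.take_prefix 2 (htMorph b)).trans (List.prefix_append _ _)
  | b :: c :: v =>
      refine ⟨b, c, ?_⟩
      simp only [List.flatMap_cons]
      rw [← List.append_assoc]
      have hlen : 2 ≤ (htMorph b ++ htMorph c).length := by
        fin_cases b <;> fin_cases c <;> simp [htMorph]
      rw [List.take_append_of_le_length hlen]
      exact List.take_prefix _ _

/-- Every short infix of `flatMap htMorph u` is an infix of the image of three letters. -/
lemma cover : ∀ (u : List (Fin 3)) (t : List (Fin 3)), t.length ≤ 3 →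
    t <:+: u.flatMap htMorph →
    ∃ a b c : Fin 3, t <:+: htMorph a ++ (htMorph b ++ htMorph c) := by
  intro u
  induction u with
  | nil =>
      intro t _ ht
      simp only [List.flatMap_nil] at ht
      rw [List.eq_nil_of_infix_nil ht]
      exact ⟨0, 0, 0, List.nil_infix⟩
  | cons a u ih =>
      intro t htl ht
      simp only [List.flatMap_cons] at ht
      rcases infix_append_split ht with h | h | ⟨s₁, s₂, rfl, hne, hs₁, hs₂⟩
      · exact ⟨a, 0, 0, h.trans (List.prefix_append _ _).isInfix⟩
      · exact ih t htl h
      · -- spanning case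
        have hs₂len : s₂.length ≤ 2 := by
          have h1 : 0 < s₁.length := List.length_pos_iff.mpr hne
          rw [List.length_append] at htl
          omega
        obtain ⟨b, c, hbc⟩ := take2_flatMap u
        have hs₂' : s₂ <+: htMorph b ++ htMorph c := by
          refine List.IsPrefix.trans ?_ hbc
          rw [List.prefix_iff_eq_take] at hs₂ ⊢
          rw [List.take_take, show min s₂.length 2 = s₂.length from by omega]
          exact hs₂
        obtain ⟨x, hx⟩ := hs₁
        obtain ⟨y, hy⟩ := hs₂'
        refine ⟨a, b, c, x, y, ?_⟩
        rw [← hx, ← hy]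
        simp [List.append_assoc]

/-- The images of letters are nonempty. -/
lemma htMorph_len : ∀ a : Fin 3, 1 ≤ (htMorph a).length := by decide

lemma length_le_flatMap : ∀ l : List (Fin 3), l.length ≤ (l.flatMap htMorph).length := by
  intro l
  induction l with
  | nil => simp
  | cons a u ih =>
      simp only [List.flatMap_cons, List.length_append, List.length_cons]
      have := htMorph_len a
      omega

/-- The key combinatorial fact: no image under the morphism contains 010 or 212. -/
lemma flatMap_avoids (u : List (Fin 3)) :
    ¬ ([0,1,0] : List (Fin 3)) <:+: u.flatMap htMorph ∧
    ¬ ([2,1,2] : List (Fin 3)) <:+: u.flatMap htMorph := by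
  constructor <;> intro h
  · obtain ⟨a, b, c, h'⟩ := cover u _ (by simp) h
    revert h'
    fin_cases a <;> fin_cases b <;> fin_cases c <;> decide
  · obtain ⟨a, b, c, h'⟩ := cover u _ (by simp) h
    revert h'
    fin_cases a <;> fin_cases b <;> fin_cases c <;> decide

lemma factor_infix (w : ℕ → Fin 3) (hw : IsFixedPointN htMorph w)
    (p : List (Fin 3)) (hp : p.length = 3) (hf : FactorN w p) :
    ∃ u : List (Fin 3), p <:+: u.flatMap htMorph := by
  obtain ⟨i, hi⟩ := hf
  refine ⟨(List.range (i+3)).map w, ?_⟩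
  have hPlen : i + 3 ≤ (((List.range (i+3)).map w).flatMap htMorph).length := by
    have h2 := length_le_flatMap ((List.range (i+3)).map w)
    rwa [List.length_map, List.length_range] at h2
  have hpeq : p = ((((List.range (i+3)).map w).flatMap htMorph).drop i).take 3 := by
    apply List.ext_getElem
    · rw [List.length_take, List.length_drop, hp]
      omega
    · intro k h1 h2
      rw [List.getElem_take, List.getElem_drop]
      have hk : k < 3 := by rw [hp] at h1; exact h1
      rw [hw.2 (i+3) (i+k) (by omega)]
      exact hi k h1
  rw [hpeq]
  exact ((List.take_prefix _ _).isInfix).trans (List.drop_suffix i _).isInfix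

theorem b3_avoids_010_212 (w : ℕ → Fin 3) (hw : IsFixedPointN htMorph w) :
    ¬ FactorN w [0,1,0] ∧ ¬ FactorN w [2,1,2] := by
  constructor
  · intro h
    obtain ⟨u, hu⟩ := factor_infix w hw [0,1,0] rfl h
    exact (flatMap_avoids u).1 hu
  · intro h
    obtain ⟨u, hu⟩ := factor_infix w hw [2,1,2] rfl h
    exact (flatMap_avoids u).2 hu
end

section
/- Suppose a bi-infinite binary word w contains a square uu with |u| ≥ 7. Write u = x v y with |x| = |y| = 2 (so |v| ≥ 3). Then the length-4 word y x contains a nonempty square (every binary word of length 4 contains a nonempty square), and consequently w contains an occurrence h of the pattern ABBA with |h(A)| ≥ 3. -/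
/-- `u` is a factor of the bi-infinite word `w : ℤ → α`. -/
def FactorZ {α : Type*} (w : ℤ → α) (u : List α) : Prop :=
  ∃ i : ℤ, ∀ k : ℕ, (h : k < u.length) → u[k]'h = w (i + k)

lemma mk_ABBA (w : ℤ → Fin 2) (i : ℤ) (m ℓ : ℕ) (hm : 3 ≤ m) (hℓ : 0 < ℓ)
    (hq : ∀ t, t < ℓ → w (i + ((m + t : ℕ) : ℤ)) = w (i + ((m + ℓ + t : ℕ) : ℤ)))
    (hp : ∀ t, t < m → w (i + ((t : ℕ) : ℤ)) = w (i + ((m + 2*ℓ + t : ℕ) : ℤ))) :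
    ∃ p q : List (Fin 2), p ≠ [] ∧ q ≠ [] ∧ 3 ≤ p.length ∧
      FactorZ w (p ++ q ++ q ++ p) := by
  refine ⟨(List.range m).map (fun t : ℕ => w (i + ((t : ℕ) : ℤ))),
          (List.range ℓ).map (fun t : ℕ => w (i + ((m + t : ℕ) : ℤ))), ?_, ?_, ?_, i, ?_⟩
  · simp only [ne_eq, List.map_eq_nil_iff, List.range_eq_nil]; omega
  · simp only [ne_eq, List.map_eq_nil_iff, List.range_eq_nil]; omega
  · simpa using hm
  · intro k hk
    simp only [List.length_append, List.length_map, List.length_range] at hk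
    simp only [List.getElem_append, List.length_append, List.length_map, List.length_range,
      List.getElem_map, List.getElem_range]
    split_ifs with h1 h2 h3
    · rfl
    · congr 1
      push_cast
      omega
    · rw [hq (k - (m + ℓ)) (by omega)]
      congr 1
      push_cast
      omega
    · rw [hp (k - (m + ℓ + ℓ)) (by omega)]
      congr 1
      push_cast
      omega

theorem big_square_gives_ABBA (w : ℤ → Fin 2) (u : List (Fin 2))
    (hu : 7 ≤ u.length) (hsq : FactorZ w (u ++ u)) :
    ∃ p q : List (Fin 2), p ≠ [] ∧ q ≠ [] ∧ 3 ≤ p.length ∧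
      FactorZ w (p ++ q ++ q ++ p) := by
  obtain ⟨i, hi⟩ := hsq
  set n := u.length with hn
  have hw1 : ∀ k, (h : k < n) → w (i + ((k : ℕ) : ℤ)) = u[k]'h := by
    intro k h
    have := hi k (by simp; omega)
    rw [← this, List.getElem_append_left]
  have hw2 : ∀ k, (h : k < n) → w (i + ((n + k : ℕ) : ℤ)) = u[k]'h := by
    intro k h
    have := hi (n + k) (by simp; omega)
    rw [← this, List.getElem_append_right (by omega)]
    congr 1; omega
  have h2 : n - 2 < n := by omega
  have h1 : n - 1 < n := by omega
  have h0 : (0:ℕ) < n := by omega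
  have h1' : (1:ℕ) < n := by omega
  have key : ∀ (j0 ℓ : ℕ), j0 ≤ 2*ℓ → ℓ ≤ 2 → 0 < ℓ →
      (∀ t, t < ℓ → w (i + ((j0 + (n - 2*ℓ) + t : ℕ) : ℤ))
          = w (i + ((j0 + (n - 2*ℓ) + ℓ + t : ℕ) : ℤ))) →
      ∃ p q : List (Fin 2), p ≠ [] ∧ q ≠ [] ∧ 3 ≤ p.length ∧
        FactorZ w (p ++ q ++ q ++ p) := by
    intro j0 ℓ hj0 hl2 hlpos hq
    apply mk_ABBA w (i + (j0 : ℤ)) (n - 2*ℓ) ℓ (by omega) hlpos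
    · intro t ht
      have e1 : i + (j0:ℤ) + ((n - 2*ℓ + t : ℕ) : ℤ) = i + ((j0 + (n - 2*ℓ) + t : ℕ) : ℤ) := by
        push_cast; omega
      have e2 : i + (j0:ℤ) + ((n - 2*ℓ + ℓ + t : ℕ) : ℤ)
          = i + ((j0 + (n - 2*ℓ) + ℓ + t : ℕ) : ℤ) := by
        push_cast; omega
      rw [e1, e2]; exact hq t ht
    · intro t ht
      have e1 : i + (j0:ℤ) + ((t : ℕ) : ℤ) = i + ((j0 + t : ℕ) : ℤ) := by push_cast; omega
      have e2 : i + (j0:ℤ) + ((n - 2*ℓ + 2*ℓ + t : ℕ) : ℤ)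
          = i + ((n + (j0 + t) : ℕ) : ℤ) := by push_cast; omega
      rw [e1, e2]
      have hlt : j0 + t < n := by omega
      rw [hw1 _ hlt, hw2 _ hlt]
  by_cases c1 : u[n-2]'h2 = u[n-1]'h1
  · refine key 0 1 (by omega) (by omega) (by omega) ?_
    intro t ht
    interval_cases t
    have e1 : i + ((0 + (n - 2*1) + 0 : ℕ) : ℤ) = i + ((n-2 : ℕ) : ℤ) := by omega
    have e2 : i + ((0 + (n - 2*1) + 1 + 0 : ℕ) : ℤ) = i + ((n-1 : ℕ) : ℤ) := by omega
    rw [e1, e2, hw1 _ h2, hw1 _ h1]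
    exact c1
  by_cases c2 : u[n-1]'h1 = u[0]'h0
  · refine key 1 1 (by omega) (by omega) (by omega) ?_
    intro t ht
    interval_cases t
    have e1 : i + ((1 + (n - 2*1) + 0 : ℕ) : ℤ) = i + ((n-1 : ℕ) : ℤ) := by omega
    have e2 : i + ((1 + (n - 2*1) + 1 + 0 : ℕ) : ℤ) = i + ((n + 0 : ℕ) : ℤ) := by omega
    rw [e1, e2, hw1 _ h1, hw2 0 h0]
    exact c2
  by_cases c3 : u[0]'h0 = u[1]'h1'
  · refine key 2 1 (by omega) (by omega) (by omega) ?_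
    intro t ht
    interval_cases t
    have e1 : i + ((2 + (n - 2*1) + 0 : ℕ) : ℤ) = i + ((n + 0 : ℕ) : ℤ) := by omega
    have e2 : i + ((2 + (n - 2*1) + 1 + 0 : ℕ) : ℤ) = i + ((n + 1 : ℕ) : ℤ) := by omega
    rw [e1, e2, hw2 0 h0, hw2 1 h1']
    exact c3
  · have hac : u[n-2]'h2 = u[0]'h0 ∧ u[n-1]'h1 = u[1]'h1' := by
      have ha := (u[n-2]'h2).is_lt
      have hb := (u[n-1]'h1).is_lt
      have hc := (u[0]'h0).is_lt
      have hd := (u[1]'h1').is_lt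
      simp only [ne_eq, Fin.ext_iff] at c1 c2 c3 ⊢
      omega
    refine key 2 2 (by omega) (by omega) (by omega) ?_
    intro t ht
    interval_cases t
    · have e1 : i + ((2 + (n - 2*2) + 0 : ℕ) : ℤ) = i + ((n-2 : ℕ) : ℤ) := by omega
      have e2 : i + ((2 + (n - 2*2) + 2 + 0 : ℕ) : ℤ) = i + ((n + 0 : ℕ) : ℤ) := by omega
      rw [e1, e2, hw1 _ h2, hw2 0 h0]
      exact hac.1
    · have e1 : i + ((2 + (n - 2*2) + 1 : ℕ) : ℤ) = i + ((n-1 : ℕ) : ℤ) := by omega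
      have e2 : i + ((2 + (n - 2*2) + 2 + 1 : ℕ) : ℤ) = i + ((n + 1 : ℕ) : ℤ) := by omega
      rw [e1, e2, hw1 _ h1, hw2 1 h1']
      exact hac.2
end

section
/- Let P be a pattern containing an isolated variable (a variable occurring exactly once in P), and suppose P is unavoidable over the k-letter alphabet (every infinite word over Σ_k contains an occurrence of P). Then every infinite word over Σ_k contains infinitely many distinct occurrences of P, i.e., oc_k(P) = ∞. -/
open Filter

section Factors

variable {α : Type*}

def IsFactorAt (w : ℕ → α) (u : List α) (i : ℕ) : Prop :=
  ∀ k (h : k < u.length), u[k] = w (i + k)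

theorem isFactorAt_append {w : ℕ → α} {u v : List α} {i : ℕ} :
    IsFactorAt w (u ++ v) i ↔ IsFactorAt w u i ∧ IsFactorAt w v (i + u.length) := by
  constructor
  · intro h
    refine ⟨fun k hk => ?_, fun k hk => ?_⟩
    · have := h k (by simp only [List.length_append]; omega)
      rwa [List.getElem_append_left hk] at this
    · have := h (u.length + k) (by simp only [List.length_append]; omega)
      rw [List.getElem_append_right (by omega)] at this
      simpa [Nat.add_assoc] using this
  · rintro ⟨hu, hv⟩ k hk
    by_cases hku : k < u.length
    · rw [List.getElem_append_left hku]
      exact hu k hku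
    · rw [List.getElem_append_right (by omega), hv]
      congr 1
      omega

theorem isFactorAt_ofFn (w : ℕ → α) (i n : ℕ) :
    IsFactorAt w (List.ofFn fun t : Fin n => w (i + t)) i := by
  intro k hk
  simp

theorem isFactorAt_shift {w : ℕ → α} {u : List α} {n i : ℕ} :
    IsFactorAt (fun j => w (n + j)) u i ↔ IsFactorAt w u (n + i) := by
  simp only [IsFactorAt, Nat.add_assoc]

end Factors

theorem List.exists_eq_append_cons_of_count_eq_one {V : Type*} [DecidableEq V] {P : List V}
    {x : V} (hx : P.count x = 1) : ∃ A B, P = A ++ x :: B ∧ x ∉ A ∧ x ∉ B := by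
  obtain ⟨A, B, rfl⟩ := List.append_of_mem (List.count_pos_iff.mp (by omega : 0 < P.count x))
  simp only [List.count_append, List.count_cons_self] at hx
  exact ⟨A, B, rfl, List.count_eq_zero.mp (by omega), List.count_eq_zero.mp (by omega)⟩

section Occurrences

variable {V α : Type*}

def occurrences (w : ℕ → α) (P : List V) : Set (V → List α) :=
  {g | (∀ x ∈ P, g x ≠ []) ∧ (∀ x ∉ P, g x = []) ∧ FactorN w (P.flatMap g)}

theorem frequently_exists_mem_occurrences_isFactorAt [DecidableEq V] {P : List V}
    (hunav : ∀ w : ℕ → α, ∃ g : V → List α, (∀ x ∈ P, g x ≠ []) ∧ FactorN w (P.flatMap g))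
    (w : ℕ → α) :
    ∃ᶠ i in atTop, ∃ g ∈ occurrences w P, IsFactorAt w (P.flatMap g) i := by
  rw [frequently_atTop]
  intro n
  obtain ⟨g, hg, i, hi⟩ := hunav fun j => w (n + j)
  set g' : V → List α := fun y => if y ∈ P then g y else []
  have hflat : P.flatMap g' = P.flatMap g := List.flatMap_congr fun y hy => if_pos hy
  have hocc : IsFactorAt w (P.flatMap g') (n + i) := hflat ▸ isFactorAt_shift.mp hi
  refine ⟨n + i, Nat.le_add_right n i, g', ⟨?_, ?_, _, hocc⟩, hocc⟩
  · intro y hy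
    simpa [g', hy] using hg y hy
  · intro y hy
    simp [g', hy]

/-- `x` is sent to the factor of `w` running from the image of `x` in the
occurrence at `i` to the end of the image of `x` in the occurrence at `i + d`. -/
theorem exists_mem_occurrences_length_eq_add [DecidableEq V] {w : ℕ → α} {A B : List V} {x : V}
    (hxA : x ∉ A) (hxB : x ∉ B) {g : V → List α} (hg : g ∈ occurrences w (A ++ x :: B))
    {i d : ℕ} (hi : IsFactorAt w ((A ++ x :: B).flatMap g) i)
    (hid : IsFactorAt w ((A ++ x :: B).flatMap g) (i + d)) :
    ∃ h ∈ occurrences w (A ++ x :: B), (h x).length = (g x).length + d := by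
  set a := (A.flatMap g).length
  set m := (g x).length
  set X := List.ofFn fun t : Fin (m + d) => w (i + a + t)
  have hX : X ≠ [] := by
    have : 0 < m := List.length_pos_iff.mpr (hg.1 x (by simp))
    exact List.ne_nil_of_length_pos (by simp only [X, List.length_ofFn]; omega)
  have hupdate : ∀ L : List V, x ∉ L → L.flatMap (Function.update g x X) = L.flatMap g :=
    fun L hxL => List.flatMap_congr fun y hy =>
      Function.update_of_ne (by rintro rfl; exact hxL hy) _ _
  refine ⟨Function.update g x X, ⟨?_, ?_, i, ?_⟩, by simp [X]⟩
  · intro y hy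
    rcases eq_or_ne y x with rfl | hyx
    · simpa using hX
    · simpa [hyx] using hg.1 y hy
  · intro y hy
    have hyx : y ≠ x := fun hyx => hy (by simp [hyx])
    simpa [hyx] using hg.2.1 y hy
  · change IsFactorAt w _ i
    simp only [List.flatMap_append, List.flatMap_cons] at hi hid ⊢
    rw [hupdate A hxA, hupdate B hxB, Function.update_self]
    obtain ⟨hA, -⟩ := isFactorAt_append.mp hi
    obtain ⟨-, hB⟩ := isFactorAt_append.mp (isFactorAt_append.mp hid).2
    refine isFactorAt_append.mpr ⟨hA, isFactorAt_append.mpr ⟨isFactorAt_ofFn w _ _, ?_⟩⟩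
    convert hB using 1
    simp only [X, List.length_ofFn]
    omega

end Occurrences

/-- Occurrences are normalized so that variables not appearing in `P` are sent to the empty
word; distinctness is thus equality of the assignments on the variables of `P`. -/
theorem isolated_unavoidable_infinitely_many_occurrences
    {V : Type*} [DecidableEq V] (k : ℕ) (P : List V)
    (hiso : ∃ x : V, P.count x = 1)
    (hunav : ∀ w : ℕ → Fin k, ∃ g : V → List (Fin k),
      (∀ x ∈ P, g x ≠ []) ∧ FactorN w (P.flatMap g)) :
    ∀ w : ℕ → Fin k,
      {g : V → List (Fin k) | (∀ x ∈ P, g x ≠ []) ∧ (∀ x ∉ P, g x = []) ∧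
        FactorN w (P.flatMap g)}.Infinite := by
  intro w
  change (occurrences w P).Infinite
  have hfreq := frequently_exists_mem_occurrences_isFactorAt hunav w
  obtain ⟨x, hx⟩ := hiso
  obtain ⟨A, B, rfl, hxA, hxB⟩ := List.exists_eq_append_cons_of_count_eq_one hx
  intro hfin
  obtain ⟨M, hM⟩ := (hfin.image fun g => (g x).length).bddAbove
  obtain ⟨g, hg, hg_freq⟩ := hfin.frequently_exists.mp hfreq
  obtain ⟨i, hi⟩ := hg_freq.exists
  obtain ⟨p, hip, hp⟩ := frequently_atTop.mp hg_freq (i + M + 1)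
  obtain ⟨h, hh, hlen⟩ := exists_mem_occurrences_length_eq_add hxA hxB hg hi
    (d := p - i) (by rwa [Nat.add_sub_cancel' (by omega)])
  have : (h x).length ≤ M := hM ⟨h, hh, rfl⟩
  omega
end
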